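/- Let (ρ_k) be a positive sequence satisfying ρ_k = ρ_{k-1} + 1/D_k where D_k = λ_e + λ_w^{(1)}(1 + λ_e ρ_{k-1})² + λ_w^{(2)}(1 + ρ_{k-1}[λ_e + λ_w^{(1)}(1 + λ_e ρ_{k-1})²])², with λ_e, λ_w^{(1)}, λ_w^{(2)} > 0 and ρ_0 > 0. Then ρ_k / k^{1/7} → (7/(λ_e⁴ (λ_w^{(1)})² λ_w^{(2)}))^{1/7} as k → ∞. -/

import Mathlib

/-!
The increments `1 / D(ρ_k)` are positive and bounded away from zero while `ρ_k` stays bounded,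
so `ρ_k → ∞`. Since `D` is a polynomial of degree 6 with leading coefficient
`C = λ_e⁴ (λ_w⁽¹⁾)² λ_w⁽²⁾`, this gives `ρ_k⁶ (ρ_{k+1} - ρ_k) → 1/C`, hence
`ρ_{k+1}⁷ - ρ_k⁷ → 7/C`. By Cesàro, `ρ_k⁷ / k → 7/C`, and taking seventh roots finishes.
-/

open Filter Topology Finset

theorem tendsto_atTop_of_succ_eq_add {x : ℕ → ℝ} {f : ℝ → ℝ} (hf : Continuous f)
    (hf_pos : ∀ y, 0 < f y) (hrec : ∀ k, x (k + 1) = x k + f (x k)) :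
    Tendsto x atTop atTop := by
  have hmono : Monotone x := monotone_nat_of_le_succ fun k => by
    rw [hrec k]; linarith [hf_pos (x k)]
  rcases tendsto_atTop_of_monotone hmono with h | ⟨l, hl⟩
  · exact h
  · have h_step : Tendsto (fun k => x (k + 1) - x k) atTop (𝓝 (f l)) :=
      ((hf.tendsto l).comp hl).congr fun k => by simp [hrec k]
    have h_step' : Tendsto (fun k => x (k + 1) - x k) atTop (𝓝 (l - l)) :=
      (hl.comp (tendsto_add_atTop_nat 1)).sub hl
    exact absurd (tendsto_nhds_unique h_step h_step') (by simpa using (hf_pos l).ne')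

theorem tendsto_pow_succ_sub_pow_succ {x : ℕ → ℝ} {c : ℝ} (n : ℕ)
    (hx : Tendsto x atTop atTop)
    (h : Tendsto (fun k => x k ^ n * (x (k + 1) - x k)) atTop (𝓝 c)) :
    Tendsto (fun k => x (k + 1) ^ (n + 1) - x k ^ (n + 1)) atTop (𝓝 ((n + 1) * c)) := by
  -- With `s = Δx / x`: `Δ(x ^ (n + 1)) = x ^ n Δx ∑_{i ≤ n} (1 + s) ^ i`, and `s → 0`.
  set s : ℕ → ℝ := fun k => (x (k + 1) - x k) / x k
  have hs : Tendsto s atTop (𝓝 0) := by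
    refine (h.div_atTop ((tendsto_pow_atTop n.succ_ne_zero).comp hx)).congr' ?_
    filter_upwards [hx.eventually_gt_atTop 0] with k hk
    simp only [s, Function.comp_apply, pow_succ]
    field_simp
  have h_geom : Tendsto (fun k => ∑ i ∈ range (n + 1), (1 + s k) ^ i) atTop
      (𝓝 (n + 1)) := by
    have hcont : Continuous fun y : ℝ => ∑ i ∈ range (n + 1), y ^ i := by fun_prop
    have h1s : Tendsto (fun k => 1 + s k) atTop (𝓝 1) := by simpa using hs.const_add 1
    have := (hcont.tendsto 1).comp h1s
    simp only [one_pow, sum_const, card_range, nsmul_eq_mul, mul_one, Nat.cast_add,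
      Nat.cast_one] at this
    exact this
  refine ((h.mul h_geom).congr' ?_).trans (by rw [mul_comm])
  filter_upwards [hx.eventually_gt_atTop 0] with k hk
  have hsucc : x (k + 1) = x k * (1 + s k) := by
    simp only [s]; field_simp; ring
  calc x k ^ n * (x (k + 1) - x k) * ∑ i ∈ range (n + 1), (1 + s k) ^ i
      = x k ^ (n + 1) * ((∑ i ∈ range (n + 1), (1 + s k) ^ i) * (1 + s k - 1)) := by
        simp only [s]; field_simp; ring
    _ = x (k + 1) ^ (n + 1) - x k ^ (n + 1) := by
        rw [geom_sum_mul, hsucc, mul_pow]; ring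

theorem tendsto_div_natCast_of_tendsto_sub {a : ℕ → ℝ} {L : ℝ}
    (h : Tendsto (fun k => a (k + 1) - a k) atTop (𝓝 L)) :
    Tendsto (fun k => a k / k) atTop (𝓝 L) := by
  have h_avg : Tendsto (fun n : ℕ => (n : ℝ)⁻¹ * (a n - a 0)) atTop (𝓝 L) := by
    simpa only [sum_range_sub (fun i => a i)] using h.cesaro
  have h_init : Tendsto (fun n : ℕ => (n : ℝ)⁻¹ * a 0) atTop (𝓝 0) := by
    simpa using (tendsto_inv_atTop_zero.comp tendsto_natCast_atTop_atTop).mul_const (a 0)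
  simpa [div_eq_inv_mul, mul_sub] using h_avg.add h_init

theorem tendsto_div_rpow_inv_of_tendsto_pow_div {x : ℕ → ℝ} {L : ℝ} {m : ℕ} (hm : m ≠ 0)
    (hx : ∀ᶠ k in atTop, 0 ≤ x k) (h : Tendsto (fun k => x k ^ m / k) atTop (𝓝 L)) :
    Tendsto (fun k : ℕ => x k / (k : ℝ) ^ ((1 : ℝ) / m)) atTop (𝓝 (L ^ ((1 : ℝ) / m))) := by
  refine (h.rpow_const (Or.inr (by positivity))).congr' ?_
  filter_upwards [hx, eventually_gt_atTop 0] with k hxk hk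
  rw [Real.div_rpow (by positivity) (by positivity), ← Real.rpow_natCast,
    ← Real.rpow_mul hxk, mul_one_div_cancel (by exact_mod_cast hm), Real.rpow_one]

def precisionDenom (lam_e lam_w1 lam_w2 x : ℝ) : ℝ :=
  lam_e + lam_w1 * (1 + lam_e * x) ^ 2
    + lam_w2 * (1 + x * (lam_e + lam_w1 * (1 + lam_e * x) ^ 2)) ^ 2

theorem precisionDenom_pos {lam_e lam_w1 lam_w2 : ℝ} (hle : 0 < lam_e) (hlw1 : 0 ≤ lam_w1)
    (hlw2 : 0 ≤ lam_w2) (x : ℝ) : 0 < precisionDenom lam_e lam_w1 lam_w2 x := by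
  unfold precisionDenom; positivity

theorem continuous_precisionDenom (lam_e lam_w1 lam_w2 : ℝ) :
    Continuous (precisionDenom lam_e lam_w1 lam_w2) := by
  unfold precisionDenom; fun_prop

theorem tendsto_pow_six_div_precisionDenom {lam_e lam_w1 lam_w2 : ℝ} (hle : lam_e ≠ 0)
    (hlw1 : lam_w1 ≠ 0) (hlw2 : lam_w2 ≠ 0) :
    Tendsto (fun x => x ^ 6 / precisionDenom lam_e lam_w1 lam_w2 x) atTop
      (𝓝 (lam_e ^ 4 * lam_w1 ^ 2 * lam_w2)⁻¹) := by
  -- `precisionDenom x = x ^ 6 * g x⁻¹`, with `g 0` the leading coefficient.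
  set g : ℝ → ℝ := fun u => lam_e * u ^ 6 + lam_w1 * u ^ 4 * (u + lam_e) ^ 2
      + lam_w2 * (u ^ 3 + lam_e * u ^ 2 + lam_w1 * (u + lam_e) ^ 2) ^ 2
  have hg : Tendsto (fun x => g x⁻¹) atTop (𝓝 (lam_e ^ 4 * lam_w1 ^ 2 * lam_w2)) := by
    have hg0 : g 0 = lam_e ^ 4 * lam_w1 ^ 2 * lam_w2 := by simp only [g]; ring
    rw [← hg0]
    exact ((by fun_prop : Continuous g).tendsto 0).comp tendsto_inv_atTop_zero
  refine (hg.inv₀ (by positivity)).congr' ?_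
  filter_upwards [eventually_gt_atTop 0] with x hx
  simp only [g, precisionDenom]
  field_simp
  ring

theorem three_agent_precision_rate_general
    (lam_e lam_w1 lam_w2 : ℝ) (hle : 0 < lam_e) (hlw1 : 0 < lam_w1) (hlw2 : 0 < lam_w2)
    (ρ : ℕ → ℝ)
    (hrec : ∀ k : ℕ, ρ (k + 1) = ρ k
      + 1 / (lam_e + lam_w1 * (1 + lam_e * ρ k) ^ 2
          + lam_w2 * (1 + ρ k * (lam_e + lam_w1 * (1 + lam_e * ρ k) ^ 2)) ^ 2)) :
    Tendsto (fun k : ℕ => ρ k / (k : ℝ) ^ ((1 : ℝ) / 7)) atTop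
      (nhds ((7 / (lam_e ^ 4 * lam_w1 ^ 2 * lam_w2)) ^ ((1 : ℝ) / 7))) := by
  have hrec' : ∀ k, ρ (k + 1) = ρ k + 1 / precisionDenom lam_e lam_w1 lam_w2 (ρ k) := hrec
  have htop : Tendsto ρ atTop atTop :=
    tendsto_atTop_of_succ_eq_add (continuous_const.div (continuous_precisionDenom _ _ _)
      fun y => (precisionDenom_pos hle hlw1.le hlw2.le y).ne')
      (fun y => one_div_pos.2 (precisionDenom_pos hle hlw1.le hlw2.le y)) hrec'
  have hstep : Tendsto (fun k => ρ k ^ 6 * (ρ (k + 1) - ρ k)) atTop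
      (𝓝 (lam_e ^ 4 * lam_w1 ^ 2 * lam_w2)⁻¹) :=
    ((tendsto_pow_six_div_precisionDenom hle.ne' hlw1.ne' hlw2.ne').comp htop).congr
      fun k => by simp [hrec' k, div_eq_mul_inv]
  have hpow : Tendsto (fun k => ρ k ^ 7 / k) atTop
      (𝓝 (7 / (lam_e ^ 4 * lam_w1 ^ 2 * lam_w2))) := by
    have := tendsto_div_natCast_of_tendsto_sub (a := fun k => ρ k ^ (6 + 1))
      (tendsto_pow_succ_sub_pow_succ 6 htop hstep)
    norm_num [div_eq_mul_inv] at this ⊢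
    exact this
  simpa using tendsto_div_rpow_inv_of_tendsto_pow_div (m := 7) (by norm_num)
    (htop.eventually_ge_atTop 0) hpow

/-- Three-agent word-of-mouth social learning: the public-belief precision grows like
`k^{1/7}`, with `ρ_k / k^{1/7} → (7/(λ_e⁴ (λ_w⁽¹⁾)² λ_w⁽²⁾))^{1/7}`. -/
theorem three_agent_precision_rate
    (lam_e lam_w1 lam_w2 : ℝ) (hle : 0 < lam_e) (hlw1 : 0 < lam_w1) (hlw2 : 0 < lam_w2)
    (ρ : ℕ → ℝ) (hρ0 : 0 < ρ 0) (hρpos : ∀ k, 0 < ρ k)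
    (hrec : ∀ k : ℕ, ρ (k + 1) = ρ k
      + 1 / (lam_e + lam_w1 * (1 + lam_e * ρ k) ^ 2
          + lam_w2 * (1 + ρ k * (lam_e + lam_w1 * (1 + lam_e * ρ k) ^ 2)) ^ 2)) :
    Tendsto (fun k : ℕ => ρ k / (k : ℝ) ^ ((1 : ℝ) / 7)) atTop
      (nhds ((7 / (lam_e ^ 4 * lam_w1 ^ 2 * lam_w2)) ^ ((1 : ℝ) / 7))) :=
  three_agent_precision_rate_general lam_e lam_w1 lam_w2 hle hlw1 hlw2 ρ hrec
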